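/- arXiv:1607.02584 — 4 statements merged into one kernel-verified Lean document; each statement's English description precedes it below -/
import Mathlib

section
/- Suppose f̂ ≥ f pointwise, the error h = f̂ − f satisfies |h(x)| ≤ (L/2)‖x−κ‖² for all x, and f̂(x) − (P/2)‖x−κ‖² is convex with P ≥ L ≥ 0 (scalar case of the majorant first-order surrogate). Then for all x, y and every subgradient u ∈ ∂f̂(x): f(x) + ⟨u, y−x⟩ − f(y) ≤ (1/2)(L‖y−κ‖² − P‖y−x‖²). -/
open scoped RealInnerProductSpace

/-- Key property of majorant first-order surrogates (scalar, single-block case). -/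
theorem stmt_6 {p : ℕ} (f fhat : EuclideanSpace ℝ (Fin p) → ℝ)
    (κ : EuclideanSpace ℝ (Fin p)) (L P : ℝ) (hL : 0 ≤ L) (hPL : L ≤ P)
    (hconv : ConvexOn ℝ Set.univ fhat)
    (hmaj : ∀ x, f x ≤ fhat x)
    (hprox : ∀ x, |fhat x - f x| ≤ L / 2 * ‖x - κ‖ ^ 2)
    (hstrong : ConvexOn ℝ Set.univ (fun x => fhat x - P / 2 * ‖x - κ‖ ^ 2))
    (x y u : EuclideanSpace ℝ (Fin p))
    (hu : ∀ z, fhat x + ⟪u, z - x⟫ ≤ fhat z) :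
    f x + ⟪u, y - x⟫ - f y ≤ (1/2) * (L * ‖y - κ‖ ^ 2 - P * ‖y - x‖ ^ 2) := by
  -- Key: strong-convexity type subgradient inequality
  have key : fhat x + ⟪u, y - x⟫ + P / 2 * ‖y - x‖ ^ 2 ≤ fhat y := by
    have step : ∀ t : ℝ, t ∈ Set.Ioc (0:ℝ) 1 →
        fhat x + ⟪u, y - x⟫ + P / 2 * ‖y - x‖ ^ 2 ≤ fhat y + P / 2 * t * ‖y - x‖ ^ 2 := by
      intro t ht
      obtain ⟨ht0, ht1⟩ := ht
      set z := (1 - t) • x + t • y with hz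
      have hconvz := hstrong.2 (Set.mem_univ x) (Set.mem_univ y)
        (by linarith : (0:ℝ) ≤ 1 - t) (le_of_lt ht0) (by ring)
      simp only at hconvz
      -- norm identity
      have hid : ‖z - κ‖ ^ 2 = (1 - t) * ‖x - κ‖ ^ 2 + t * ‖y - κ‖ ^ 2
          - t * (1 - t) * ‖y - x‖ ^ 2 := by
        have hzk : z - κ = (1 - t) • (x - κ) + t • (y - κ) := by
          simp [hz, smul_sub]; module
        have hyx : y - x = (y - κ) - (x - κ) := by abel
        have h1 : ‖z - κ‖ ^ 2 = (1 - t) ^ 2 * ‖x - κ‖ ^ 2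
            + 2 * (t * (1 - t)) * ⟪x - κ, y - κ⟫ + t ^ 2 * ‖y - κ‖ ^ 2 := by
          rw [hzk, norm_add_sq_real, real_inner_smul_left, real_inner_smul_right,
            norm_smul, norm_smul, Real.norm_eq_abs, Real.norm_eq_abs,
            abs_of_nonneg (by linarith : (0:ℝ) ≤ 1 - t), abs_of_nonneg ht0.le]
          ring
        have h2 : ‖y - x‖ ^ 2 = ‖y - κ‖ ^ 2 - 2 * ⟪x - κ, y - κ⟫ + ‖x - κ‖ ^ 2 := by
          rw [hyx, norm_sub_sq_real, real_inner_comm]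
        rw [h1, h2]; ring
      have hsub := hu z
      have hzx : z - x = t • (y - x) := by simp [hz, smul_sub]; module
      rw [hzx, real_inner_smul_right] at hsub
      have hP : 0 ≤ P := le_trans hL hPL
      rw [hz.symm, hid] at hconvz
      simp only [smul_eq_mul] at hconvz
      nlinarith [hsub, hconvz, sq_nonneg ‖y - x‖, ht0]
    have hlim : Filter.Tendsto (fun t : ℝ => fhat y + P / 2 * t * ‖y - x‖ ^ 2)
        (nhdsWithin 0 (Set.Ioc (0:ℝ) 1)) (nhds (fhat y)) := by
      have h : Filter.Tendsto (fun t : ℝ => fhat y + P / 2 * t * ‖y - x‖ ^ 2)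
          (nhds 0) (nhds (fhat y + P / 2 * 0 * ‖y - x‖ ^ 2)) :=
        (Continuous.tendsto (by fun_prop) 0)
      simpa using h.mono_left nhdsWithin_le_nhds
    have hne : (nhdsWithin (0:ℝ) (Set.Ioc (0:ℝ) 1)).NeBot :=
      left_nhdsWithin_Ioc_neBot (by norm_num)
    exact ge_of_tendsto hlim (Filter.eventually_of_mem self_mem_nhdsWithin step)
  have h1 := hmaj x
  have h2 := abs_le.mp (hprox y)
  linarith [h2.2]
end

section
/- Let f, f̂ : ℝ^{p₁} × ⋯ × ℝ^{pₙ} → ℝ with f̂ convex, f̂ ≥ f pointwise, |f̂(x) − f(x)| ≤ (1/2)∑ᵢ ‖xᵢ − κᵢ‖²_{Lᵢ}, and x ↦ f̂(x) − (1/2)∑ᵢ ‖xᵢ − κᵢ‖²_{Pᵢ} convex, where each Lᵢ, Pᵢ are positive semidefinite. Then for all x, y and every u ∈ ∂f̂(x): f(x) + ⟨u, y−x⟩ − f(y) ≤ (1/2)∑ᵢ (‖yᵢ − κᵢ‖²_{Lᵢ} − ‖yᵢ − xᵢ‖²_{Pᵢ}). -/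
/-!
Write `q(z) = ½ ∑ ‖zᵢ - κᵢ‖²_{Pᵢ}`, which is a quadratic polynomial in `t` along `x + t (y - x)`.
Comparing the subgradient inequality of `fhat` at `x + t (y - x)` with the convexity of `fhat - q`
and letting `t → 0⁺` shows that `u - ∇q(x)` is a subgradient of the convex function `fhat - q` at
`x`. Adding back `q` gives the subgradient inequality of `fhat` strengthened by the curvature term
`½ ∑ ‖yᵢ - xᵢ‖²_{Pᵢ}`; the bounds `f x ≤ fhat x` and `fhat y - f y ≤ ½ ∑ ‖yᵢ - κᵢ‖²_{Lᵢ}` then give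
the claim.
-/

open Matrix Filter Topology Set

theorem le_of_forall_le_add_mul {a b s : ℝ} (h : ∀ t ∈ Ioc (0 : ℝ) 1, a ≤ b + t * s) : a ≤ b := by
  have hlim : Tendsto (fun t : ℝ => b + t * s) (𝓝[>] 0) (𝓝 b) :=
    ((by fun_prop : Continuous fun t : ℝ => b + t * s).tendsto' 0 b (by simp)).mono_left
      nhdsWithin_le_nhds
  exact ge_of_tendsto hlim (mem_of_superset (Ioc_mem_nhdsGT one_pos) h)

theorem subgradient_ineq_add_of_convexOn_sub {E : Type*} [AddCommGroup E] [Module ℝ E]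
    {F q : E → ℝ} (hconv : ConvexOn ℝ univ (fun z => F z - q z)) (ℓ : E →ₗ[ℝ] ℝ) {x y : E}
    (hsub : ∀ z, F x + ℓ (z - x) ≤ F z) {c s : ℝ}
    (hq : ∀ t : ℝ, q (x + t • (y - x)) = q x + t * c + t ^ 2 * s) :
    F x + ℓ (y - x) + s ≤ F y := by
  have hslope : ℓ (y - x) ≤ (F y - q y) - (F x - q x) + c := by
    refine le_of_forall_le_add_mul (s := s) fun t ⟨ht0, ht1⟩ => ?_
    have hseg : x + t • (y - x) = (1 - t) • x + t • y := by
      rw [smul_sub, sub_smul, one_smul]; abel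
    have hconv_t : F ((1 - t) • x + t • y) - q ((1 - t) • x + t • y)
        ≤ (1 - t) * (F x - q x) + t * (F y - q y) :=
      hconv.2 (mem_univ x) (mem_univ y) (by linarith) ht0.le (by ring)
    have hsub_t := hsub (x + t • (y - x))
    rw [add_sub_cancel_left, map_smul, smul_eq_mul] at hsub_t
    rw [← hseg, hq t] at hconv_t
    have : t * ℓ (y - x) ≤ t * ((F y - q y) - (F x - q x) + c + t * s) := by
      linarith
    exact le_of_mul_le_mul_left this ht0
  have hq1 := hq 1
  rw [one_smul, add_sub_cancel] at hq1
  linarith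

theorem dotProduct_mulVec_add_smul {m R : Type*} [Fintype m] [CommRing R]
    (M : Matrix m m R) (a b : m → R) (t : R) :
    (a + t • b) ⬝ᵥ (M *ᵥ (a + t • b))
      = a ⬝ᵥ (M *ᵥ a) + t * (a ⬝ᵥ (M *ᵥ b) + b ⬝ᵥ (M *ᵥ a)) + t ^ 2 * (b ⬝ᵥ (M *ᵥ b)) := by
  simp only [mulVec_add, mulVec_smul, dotProduct_add, add_dotProduct, smul_dotProduct,
    dotProduct_smul, smul_eq_mul]
  ring

theorem sum_dotProduct_mulVec_add_smul {ι R : Type*} [Fintype ι] [CommRing R] {m : ι → Type*}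
    [∀ i, Fintype (m i)] (M : ∀ i, Matrix (m i) (m i) R) (a b : ∀ i, m i → R) (t : R) :
    ∑ i, (a i + t • b i) ⬝ᵥ (M i *ᵥ (a i + t • b i))
      = ∑ i, a i ⬝ᵥ (M i *ᵥ a i) + t * ∑ i, (a i ⬝ᵥ (M i *ᵥ b i) + b i ⬝ᵥ (M i *ᵥ a i))
        + t ^ 2 * ∑ i, b i ⬝ᵥ (M i *ᵥ b i) := by
  simp only [dotProduct_mulVec_add_smul, Finset.sum_add_distrib, ← Finset.mul_sum]

def blockDotProduct {ι : Type*} [Fintype ι] {m : ι → Type*} [∀ i, Fintype (m i)]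
    (u : ∀ i, m i → ℝ) : (∀ i, m i → ℝ) →ₗ[ℝ] ℝ where
  toFun v := ∑ i, u i ⬝ᵥ v i
  map_add' v w := by simp only [Pi.add_apply, dotProduct_add, Finset.sum_add_distrib]
  map_smul' t v := by simp only [Pi.smul_apply, dotProduct_smul, smul_eq_mul, Finset.mul_sum,
    RingHom.id_apply]

theorem stmt_7_general {n : ℕ} (p : Fin n → ℕ)
    (f fhat : (∀ i, Fin (p i) → ℝ) → ℝ)
    (κ : ∀ i, Fin (p i) → ℝ)
    (L P : ∀ i, Matrix (Fin (p i)) (Fin (p i)) ℝ)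
    (hmaj : ∀ x, f x ≤ fhat x)
    (hprox : ∀ x, |fhat x - f x| ≤ (1/2) * ∑ i, (x i - κ i) ⬝ᵥ (L i *ᵥ (x i - κ i)))
    (hstrong : ConvexOn ℝ Set.univ
      (fun x => fhat x - (1/2) * ∑ i, (x i - κ i) ⬝ᵥ (P i *ᵥ (x i - κ i))))
    (x y u : ∀ i, Fin (p i) → ℝ)
    (hu : ∀ z, fhat x + ∑ i, (u i) ⬝ᵥ (z i - x i) ≤ fhat z) :
    f x + ∑ i, (u i) ⬝ᵥ (y i - x i) - f y
      ≤ (1/2) * ∑ i, ((y i - κ i) ⬝ᵥ (L i *ᵥ (y i - κ i))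
          - (y i - x i) ⬝ᵥ (P i *ᵥ (y i - x i))) := by
  have hquad (t : ℝ) :
      (1/2) * ∑ i, ((x + t • (y - x)) i - κ i) ⬝ᵥ (P i *ᵥ ((x + t • (y - x)) i - κ i))
        = (1/2) * ∑ i, (x i - κ i) ⬝ᵥ (P i *ᵥ (x i - κ i))
          + t * ((1/2) * ∑ i, ((x i - κ i) ⬝ᵥ (P i *ᵥ (y i - x i))
            + (y i - x i) ⬝ᵥ (P i *ᵥ (x i - κ i))))
          + t ^ 2 * ((1/2) * ∑ i, (y i - x i) ⬝ᵥ (P i *ᵥ (y i - x i))) := by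
    have hshift : ∀ i, (x + t • (y - x)) i - κ i = (x i - κ i) + t • (y i - x i) := fun i =>
      add_sub_right_comm _ _ _
    simp only [hshift, sum_dotProduct_mulVec_add_smul]
    ring
  have hsub : fhat x + ∑ i, u i ⬝ᵥ (y i - x i)
      + (1/2) * ∑ i, (y i - x i) ⬝ᵥ (P i *ᵥ (y i - x i)) ≤ fhat y :=
    subgradient_ineq_add_of_convexOn_sub hstrong (blockDotProduct u) hu hquad
  have hfy := (le_abs_self _).trans (hprox y)
  have hfx := hmaj x
  rw [Finset.sum_sub_distrib]
  linarith

/-- Key property of majorant first-order surrogates (multi-block case, Lemma 2). -/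
theorem stmt_7 {n : ℕ} (p : Fin n → ℕ)
    (f fhat : (∀ i, Fin (p i) → ℝ) → ℝ)
    (κ : ∀ i, Fin (p i) → ℝ)
    (L P : ∀ i, Matrix (Fin (p i)) (Fin (p i)) ℝ)
    (hLpsd : ∀ i, (L i).PosSemidef) (hPpsd : ∀ i, (P i).PosSemidef)
    (hconv : ConvexOn ℝ Set.univ fhat)
    (hmaj : ∀ x, f x ≤ fhat x)
    (hprox : ∀ x, |fhat x - f x| ≤ (1/2) * ∑ i, (x i - κ i) ⬝ᵥ (L i *ᵥ (x i - κ i)))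
    (hstrong : ConvexOn ℝ Set.univ
      (fun x => fhat x - (1/2) * ∑ i, (x i - κ i) ⬝ᵥ (P i *ᵥ (x i - κ i))))
    (x y u : ∀ i, Fin (p i) → ℝ)
    (hu : ∀ z, fhat x + ∑ i, (u i) ⬝ᵥ (z i - x i) ≤ fhat z) :
    f x + ∑ i, (u i) ⬝ᵥ (y i - x i) - f y
      ≤ (1/2) * ∑ i, ((y i - κ i) ⬝ᵥ (L i *ᵥ (y i - κ i))
          - (y i - x i) ⬝ᵥ (P i *ᵥ (y i - x i))) :=
  stmt_7_general p f fhat κ L P hmaj hprox hstrong x y u hu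
end

section
/- Let r(x) = (1/2)‖Ax − b‖² with A = [A₁,…,Aₙ] block-partitioned, and let Gᵢ ∈ ℝ^{pᵢ×pᵢ} be symmetric with Gᵢ ⪰ Lᵢ' − AᵢᵀAᵢ where the Lᵢ' are PSD matrices such that (1/2)‖A(x−y)‖² ≤ (1/2)∑ᵢ ‖xᵢ−yᵢ‖²_{Lᵢ'} for all x,y. Then for any x, y: (1/2)‖Ax−b‖² ≤ (1/2)∑ᵢ₌₁ⁿ ‖Aᵢxᵢ + ∑_{j≠i} Aⱼyⱼ − b‖² + (1/2)∑ᵢ ‖xᵢ−yᵢ‖²_{Gᵢ} + ((1−n)/2)‖Ay−b‖². -/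
/-!
Put `dᵢ = Aᵢ(xᵢ - yᵢ)` and `v = Ay - b`, so that `Ax - b = ∑ᵢ dᵢ + v` and the `i`-th Jacobian
residual is `dᵢ + v`. Expanding the squares, the cross terms `2⟨∑ᵢ dᵢ, v⟩` agree on both sides and
the `n‖v‖²` coming from the residuals is cancelled by the `(1 - n)‖v‖²` term, so the claim reduces
to `‖∑ᵢ dᵢ‖² ≤ ∑ᵢ ‖dᵢ‖² + ∑ᵢ ‖xᵢ - yᵢ‖²_{Gᵢ}`. This follows from the majorant `Lᵢ'` of `‖A(x - y)‖²`
together with `‖w‖²_{Lᵢ'} ≤ ‖Aᵢw‖² + ‖w‖²_{Gᵢ}`, which is `Gᵢ ⪰ Lᵢ' - AᵢᵀAᵢ`.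
-/

open Matrix

namespace Matrix

variable {ι m n R : Type*} [Fintype ι] [Fintype m] [Fintype n]

theorem dotProduct_transpose_mul_self_mulVec [CommSemiring R] (A : Matrix m n R) (z : n → R) :
    z ⬝ᵥ ((Aᵀ * A) *ᵥ z) = (A *ᵥ z) ⬝ᵥ (A *ᵥ z) := by
  rw [← mulVec_mulVec, dotProduct_mulVec, vecMul_transpose]

theorem add_dotProduct_self [CommRing R] (u v : m → R) :
    (u + v) ⬝ᵥ (u + v) = u ⬝ᵥ u + 2 * (u ⬝ᵥ v) + v ⬝ᵥ v := by
  simp only [add_dotProduct, dotProduct_add, dotProduct_comm v u]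
  ring

theorem sum_add_dotProduct_self [CommRing R] (d : ι → m → R) (v : m → R) :
    ∑ i, (d i + v) ⬝ᵥ (d i + v)
      = ∑ i, d i ⬝ᵥ d i + 2 * ((∑ i, d i) ⬝ᵥ v) + Fintype.card ι * (v ⬝ᵥ v) := by
  simp only [add_dotProduct_self, Finset.sum_add_distrib, sum_dotProduct, Finset.mul_sum,
    Finset.sum_const, Finset.card_univ, nsmul_eq_mul]

theorem dotProduct_mulVec_le_of_posSemidef_sub {M N : Matrix n n ℝ} (h : (N - M).PosSemidef)
    (z : n → ℝ) : z ⬝ᵥ (M *ᵥ z) ≤ z ⬝ᵥ (N *ᵥ z) := by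
  have := h.dotProduct_mulVec_nonneg z
  rw [star_trivial, sub_mulVec, dotProduct_sub] at this
  linarith

theorem half_dotProduct_self_sum_add_le {d : ι → m → ℝ} {c : ℝ}
    (h : (∑ i, d i) ⬝ᵥ (∑ i, d i) ≤ ∑ i, d i ⬝ᵥ d i + c) (v : m → ℝ) :
    (1/2) * ((∑ i, d i + v) ⬝ᵥ (∑ i, d i + v))
      ≤ (1/2) * ∑ i, (d i + v) ⬝ᵥ (d i + v) + (1/2) * c
        + ((1 - (Fintype.card ι : ℝ))/2) * (v ⬝ᵥ v) := by
  rw [sum_add_dotProduct_self, add_dotProduct_self]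
  linarith

end Matrix

theorem stmt_13_general {n d : ℕ} (p : Fin n → ℕ)
    (A : ∀ i, Matrix (Fin d) (Fin (p i)) ℝ) (b : Fin d → ℝ)
    (L' G : ∀ i, Matrix (Fin (p i)) (Fin (p i)) ℝ)
    (hG : ∀ i, (G i - (L' i - (A i)ᵀ * A i)).PosSemidef)
    (hL' : ∀ x y : ∀ i, Fin (p i) → ℝ,
      (1/2) * ((∑ i, A i *ᵥ (x i - y i)) ⬝ᵥ (∑ i, A i *ᵥ (x i - y i)))
        ≤ (1/2) * ∑ i, (x i - y i) ⬝ᵥ (L' i *ᵥ (x i - y i)))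
    (x y : ∀ i, Fin (p i) → ℝ) :
    (1/2) * ((∑ i, A i *ᵥ x i - b) ⬝ᵥ (∑ i, A i *ᵥ x i - b))
      ≤ (1/2) * ∑ i, ((A i *ᵥ x i + (∑ j, A j *ᵥ y j - A i *ᵥ y i) - b)
            ⬝ᵥ (A i *ᵥ x i + (∑ j, A j *ᵥ y j - A i *ᵥ y i) - b))
        + (1/2) * ∑ i, (x i - y i) ⬝ᵥ (G i *ᵥ (x i - y i))
        + ((1 - (n : ℝ))/2) * ((∑ i, A i *ᵥ y i - b) ⬝ᵥ (∑ i, A i *ᵥ y i - b)) := by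
  set z := fun i => x i - y i
  set v := ∑ i, A i *ᵥ y i - b
  have hL'G (i) : z i ⬝ᵥ (L' i *ᵥ z i) ≤ (A i *ᵥ z i) ⬝ᵥ (A i *ᵥ z i) + z i ⬝ᵥ (G i *ᵥ z i) := by
    have hGA := hG i
    rw [sub_sub_eq_add_sub] at hGA
    have := dotProduct_mulVec_le_of_posSemidef_sub hGA (z i)
    rwa [add_mulVec, dotProduct_add, dotProduct_transpose_mul_self_mulVec, add_comm] at this
  have key : (∑ i, A i *ᵥ z i) ⬝ᵥ (∑ i, A i *ᵥ z i)
      ≤ ∑ i, (A i *ᵥ z i) ⬝ᵥ (A i *ᵥ z i) + ∑ i, z i ⬝ᵥ (G i *ᵥ z i) := by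
    have := Finset.sum_le_sum fun i (_ : i ∈ Finset.univ) => hL'G i
    rw [Finset.sum_add_distrib] at this
    linarith [hL' x y]
  have hx : ∑ i, A i *ᵥ x i - b = ∑ i, A i *ᵥ z i + v := by
    simp only [z, v, mulVec_sub, Finset.sum_sub_distrib]; abel
  have hres : ∀ i, A i *ᵥ x i + (∑ j, A j *ᵥ y j - A i *ᵥ y i) - b = A i *ᵥ z i + v := by
    intro i; simp only [z, v, mulVec_sub]; abel
  simpa only [hx, hres, Fintype.card_fin] using half_dotProduct_self_sum_add_le key v

/-- Jacobian separable majorant of the quadratic coupling term (Lemma 3(2)). -/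
theorem stmt_13 {n d : ℕ} (p : Fin n → ℕ)
    (A : ∀ i, Matrix (Fin d) (Fin (p i)) ℝ) (b : Fin d → ℝ)
    (L' G : ∀ i, Matrix (Fin (p i)) (Fin (p i)) ℝ)
    (hL'psd : ∀ i, (L' i).PosSemidef)
    (hGsymm : ∀ i, (G i).IsSymm)
    (hG : ∀ i, (G i - (L' i - (A i)ᵀ * A i)).PosSemidef)
    (hL' : ∀ x y : ∀ i, Fin (p i) → ℝ,
      (1/2) * ((∑ i, A i *ᵥ (x i - y i)) ⬝ᵥ (∑ i, A i *ᵥ (x i - y i)))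
        ≤ (1/2) * ∑ i, (x i - y i) ⬝ᵥ (L' i *ᵥ (x i - y i)))
    (x y : ∀ i, Fin (p i) → ℝ) :
    (1/2) * ((∑ i, A i *ᵥ x i - b) ⬝ᵥ (∑ i, A i *ᵥ x i - b))
      ≤ (1/2) * ∑ i, ((A i *ᵥ x i + (∑ j, A j *ᵥ y j - A i *ᵥ y i) - b)
            ⬝ᵥ (A i *ᵥ x i + (∑ j, A j *ᵥ y j - A i *ᵥ y i) - b))
        + (1/2) * ∑ i, (x i - y i) ⬝ᵥ (G i *ᵥ (x i - y i))
        + ((1 - (n : ℝ))/2) * ((∑ i, A i *ᵥ y i - b) ⬝ᵥ (∑ i, A i *ᵥ y i - b)) :=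
  stmt_13_general p A b L' G hG hL' x y
end

section
/- Let r(x) = (1/2)‖Ax−b‖² with column blocks Aᵢ, and let ηᵢ ≥ n‖Aᵢ‖₂² (operator norm squared). Then for all x, y: (1/2)‖Ax−b‖² ≤ ∑ᵢ ⟨xᵢ−yᵢ, Aᵢᵀ(Ay−b)⟩ + ∑ᵢ (ηᵢ/2)‖xᵢ−yᵢ‖² + (1/2)‖Ay−b‖². -/
open Matrix
open scoped Matrix.Norms.L2Operator

/-
Write `v = Ay - b`, `δᵢ = xᵢ - yᵢ` and `w = ∑ᵢ Aᵢ δᵢ`, so that `Ax - b = v + w` and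
`½‖Ax - b‖² = ½‖v‖² + ⟨w, v⟩ + ½‖w‖²`. The cross term is `∑ᵢ ⟨δᵢ, Aᵢᵀ v⟩`, and the
remainder is made separable by Cauchy–Schwarz over the `n` blocks followed by the
operator-norm bound on each block: `‖w‖² ≤ n ∑ᵢ ‖Aᵢ δᵢ‖² ≤ ∑ᵢ n ‖Aᵢ‖₂² ‖δᵢ‖² ≤ ∑ᵢ ηᵢ ‖δᵢ‖²`.
-/

theorem dotProduct_self_eq_norm_toLp_sq {m : Type*} [Fintype m] (v : m → ℝ) :
    v ⬝ᵥ v = ‖WithLp.toLp 2 v‖ ^ 2 := by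
  rw [← real_inner_self_eq_norm_sq, EuclideanSpace.inner_toLp_toLp, star_trivial]

theorem mulVec_dotProduct_mulVec_self_le {m k : Type*} [Fintype m] [Fintype k]
    [DecidableEq k] (A : Matrix m k ℝ) (v : k → ℝ) :
    (A *ᵥ v) ⬝ᵥ (A *ᵥ v) ≤ ‖A‖ ^ 2 * (v ⬝ᵥ v) := by
  rw [dotProduct_self_eq_norm_toLp_sq, dotProduct_self_eq_norm_toLp_sq, ← mul_pow]
  exact pow_le_pow_left₀ (norm_nonneg _) (A.l2_opNorm_mulVec (WithLp.toLp 2 v)) 2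

theorem sum_dotProduct_sum_self_le_card_mul {ι m : Type*} [Fintype ι] [Fintype m]
    (f : ι → m → ℝ) :
    (∑ i, f i) ⬝ᵥ (∑ i, f i) ≤ Fintype.card ι * ∑ i, f i ⬝ᵥ f i := by
  simp only [dotProduct, Finset.sum_apply, ← sq]
  calc ∑ k, (∑ i, f i k) ^ 2 ≤ ∑ k, Fintype.card ι * ∑ i, f i k ^ 2 :=
        Finset.sum_le_sum fun k _ => sq_sum_le_card_mul_sum_sq
    _ = Fintype.card ι * ∑ i, ∑ k, f i k ^ 2 := by rw [← Finset.mul_sum, Finset.sum_comm]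

/-- Fully linearized separable majorant of `r(x)=½‖Ax-b‖²` (Lemma 3(3)),
with `ηᵢ ≥ n‖Aᵢ‖₂²` for the spectral norm `‖·‖₂`. -/
theorem stmt_14 {n d : ℕ} (p : Fin n → ℕ)
    (A : ∀ i, Matrix (Fin d) (Fin (p i)) ℝ) (b : Fin d → ℝ)
    (η : Fin n → ℝ) (hη : ∀ i, (n : ℝ) * ‖A i‖ ^ 2 ≤ η i)
    (x y : ∀ i, Fin (p i) → ℝ) :
    (1/2) * ((∑ i, A i *ᵥ x i - b) ⬝ᵥ (∑ i, A i *ᵥ x i - b))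
      ≤ ∑ i, (x i - y i) ⬝ᵥ ((A i)ᵀ *ᵥ (∑ j, A j *ᵥ y j - b))
        + ∑ i, (η i / 2) * ((x i - y i) ⬝ᵥ (x i - y i))
        + (1/2) * ((∑ i, A i *ᵥ y i - b) ⬝ᵥ (∑ i, A i *ᵥ y i - b)) := by
  set v := ∑ j, A j *ᵥ y j - b
  set w := ∑ i, A i *ᵥ (x i - y i)
  have hsplit : ∑ i, A i *ᵥ x i - b = v + w := by
    simp only [v, w, mulVec_sub, Finset.sum_sub_distrib]
    abel
  have hcross : ∑ i, (x i - y i) ⬝ᵥ ((A i)ᵀ *ᵥ v) = w ⬝ᵥ v := by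
    simp only [w, sum_dotProduct, dotProduct_mulVec, vecMul_transpose]
  have hquad : w ⬝ᵥ w ≤ ∑ i, η i * ((x i - y i) ⬝ᵥ (x i - y i)) := calc
    w ⬝ᵥ w ≤ n * ∑ i, (A i *ᵥ (x i - y i)) ⬝ᵥ (A i *ᵥ (x i - y i)) := by
        simpa using sum_dotProduct_sum_self_le_card_mul fun i => A i *ᵥ (x i - y i)
    _ ≤ n * ∑ i, ‖A i‖ ^ 2 * ((x i - y i) ⬝ᵥ (x i - y i)) := by
        gcongr with i
        exact mulVec_dotProduct_mulVec_self_le _ _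
    _ = ∑ i, (n * ‖A i‖ ^ 2) * ((x i - y i) ⬝ᵥ (x i - y i)) := by
        simp only [Finset.mul_sum, mul_assoc]
    _ ≤ ∑ i, η i * ((x i - y i) ⬝ᵥ (x i - y i)) := by
        gcongr with i
        · rw [dotProduct_self_eq_norm_toLp_sq]; positivity
        · exact hη i
  have hhalf : ∑ i, (η i / 2) * ((x i - y i) ⬝ᵥ (x i - y i))
      = (∑ i, η i * ((x i - y i) ⬝ᵥ (x i - y i))) / 2 := by
    rw [Finset.sum_div]
    exact Finset.sum_congr rfl fun i _ => by ring
  rw [hsplit, hcross, hhalf, add_dotProduct, dotProduct_add, dotProduct_add, dotProduct_comm v w]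
  linarith
end
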